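/- arXiv:0909.0471 — 6 statements merged into one kernel-verified Lean document; each statement's English description precedes it below -/
import Mathlib

section
/- In any cover of the 2d facets of the d-cube by d sets (each set a union of facets), at least one set contains a pair of antipodal (d-2)-faces (ridges). -/
namespace Cube

/-- A face of the `d`-cube: `none` = varying coordinate (X), `some b` = fixed at `b`. -/
abbrev Face (d : ℕ) := Fin d → Option Bool

/-- `F` is a `k`-face: exactly `k` varying coordinates. -/
def IsKFace {d : ℕ} (F : Face d) (k : ℕ) : Prop :=
  (Finset.univ.filter fun i => F i = none).card = k

/-- `G` is a subface of `F`: `G` agrees with every fixed coordinate of `F`. -/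
def Subface {d : ℕ} (G F : Face d) : Prop := ∀ i b, F i = some b → G i = some b

/-- Antipodal faces: same varying positions, opposite fixed values. -/
def Antipodal {d : ℕ} (F G : Face d) : Prop := ∀ i, G i = (F i).map (!·)

abbrev Vertex (d : ℕ) := Fin d → Bool

/-- The vertex `v` lies on the face `F`. -/
def VMem {d : ℕ} (v : Vertex d) (F : Face d) : Prop := ∀ i b, F i = some b → v i = b

/-- A set of faces contains the face `G` if `G` is a subface of one of its members. -/
def SetContains {d : ℕ} (A : Set (Face d)) (G : Face d) : Prop := ∃ F ∈ A, Subface G F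

end Cube

/-! By pigeonhole, one of the `d` sets contains two of the `2d` facets. Two distinct facets
always contain antipodal ridges: for facets `x_i = b` and `x_j = c` with `i ≠ j`, take the ridges
`(x_i, x_j) = (b, ¬c)` and `(¬b, c)`; for opposite facets `x_i = b` and `x_i = ¬b`, fix any other
coordinate `x_k` to opposite values in each. -/

namespace Cube

variable {d : ℕ}

def facet (i : Fin d) (b : Bool) : Face d := Function.update (fun _ => none) i (some b)

def ridge (i : Fin d) (b : Bool) (j : Fin d) (c : Bool) : Face d :=
  Function.update (facet i b) j (some c)

lemma facet_apply_of_ne {i j : Fin d} (h : j ≠ i) (b : Bool) : facet i b j = none :=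
  Function.update_of_ne h _ _

lemma isKFace_univ : IsKFace (fun _ => none : Face d) d := by
  simp [IsKFace]

lemma IsKFace.update {F : Face d} {k : ℕ} (hF : IsKFace F k) {j : Fin d} (hj : F j = none)
    (c : Bool) : IsKFace (Function.update F j (some c)) (k - 1) := by
  have hfilter : (Finset.univ.filter fun i => Function.update F j (some c) i = none)
      = (Finset.univ.filter fun i => F i = none).erase j := by
    ext i
    by_cases hij : i = j <;> simp [hij]
  unfold IsKFace at hF ⊢
  rw [hfilter, Finset.card_erase_of_mem (by simpa using hj), hF]

lemma isKFace_facet (i : Fin d) (b : Bool) : IsKFace (facet i b) (d - 1) :=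
  isKFace_univ.update rfl b

lemma isKFace_ridge {i j : Fin d} (hij : j ≠ i) (b c : Bool) :
    IsKFace (ridge i b j c) (d - 2) :=
  (isKFace_facet i b).update (facet_apply_of_ne hij b) c

lemma Subface.refl (F : Face d) : Subface F F := fun _ _ h => h

lemma subface_update {F : Face d} {j : Fin d} (hj : F j = none) (c : Bool) :
    Subface (Function.update F j (some c)) F := by
  intro i b hi
  have hij : i ≠ j := by rintro rfl; simp [hj] at hi
  rwa [Function.update_of_ne hij]

lemma ridge_subface_left {i j : Fin d} (hij : j ≠ i) (b c : Bool) :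
    Subface (ridge i b j c) (facet i b) :=
  subface_update (facet_apply_of_ne hij b) c

lemma ridge_comm {i j : Fin d} (hij : j ≠ i) (b c : Bool) : ridge i b j c = ridge j c i b :=
  Function.update_comm hij.symm _ _ _

lemma ridge_subface_right {i j : Fin d} (hij : j ≠ i) (b c : Bool) :
    Subface (ridge i b j c) (facet j c) :=
  ridge_comm hij b c ▸ ridge_subface_left hij.symm c b

lemma Antipodal.update {F G : Face d} (h : Antipodal F G) (j : Fin d) (c : Bool) :
    Antipodal (Function.update F j (some c)) (Function.update G j (some !c)) := by
  intro i
  by_cases hij : i = j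
  · subst hij; simp
  · simp [hij, h i]

lemma antipodal_facet (i : Fin d) (b : Bool) : Antipodal (facet i b) (facet i !b) :=
  Antipodal.update (fun _ => rfl) i b

lemma antipodal_ridge (i : Fin d) (b : Bool) (j : Fin d) (c : Bool) :
    Antipodal (ridge i b j c) (ridge i (!b) j (!c)) :=
  (antipodal_facet i b).update j c

/-- For `d = 1` the "ridges" are the two opposite facets, since `d - 2 = d - 1 = 0` in `ℕ`. -/
lemma exists_antipodal_subfaces_of_ne {i j : Fin d} {b c : Bool}
    (h : (i, b) ≠ (j, c)) :
    ∃ R R' : Face d, IsKFace R (d - 2) ∧ Antipodal R R' ∧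
      Subface R (facet i b) ∧ Subface R' (facet j c) := by
  by_cases hij : j = i
  · subst hij
    obtain rfl : c = !b := by cases b <;> cases c <;> simp_all
    rcases Nat.lt_or_ge d 2 with hd1 | hd2
    · refine ⟨facet j b, facet j !b, ?_, antipodal_facet j b, .refl _, .refl _⟩
      have := j.pos
      simpa [show d - 2 = d - 1 by omega] using isKFace_facet j b
    · obtain ⟨k, hk⟩ := Fintype.exists_ne_of_one_lt_card (by rw [Fintype.card_fin]; omega) j
      exact ⟨ridge j b k false, ridge j (!b) k true, isKFace_ridge hk b false,
        antipodal_ridge j b k false, ridge_subface_left hk b false,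
        ridge_subface_left hk (!b) true⟩
  · refine ⟨ridge i b j (!c), ridge i (!b) j c, isKFace_ridge hij b (!c), ?_,
      ridge_subface_left hij b (!c), ridge_subface_right hij (!b) c⟩
    simpa using antipodal_ridge i b j (!c)

end Cube

open Cube

theorem facet_cover_antipodal_ridges_general (d : ℕ) (hd : 1 ≤ d)
    (A : Fin d → Set (Face d))
    (hcover : ∀ F : Face d, IsKFace F (d - 1) → ∃ i, F ∈ A i) :
    ∃ i, ∃ R R' : Face d, IsKFace R (d - 2) ∧ Antipodal R R' ∧
      SetContains (A i) R ∧ SetContains (A i) R' := by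
  choose f hf using fun p : Fin d × Bool => hcover _ (isKFace_facet p.1 p.2)
  obtain ⟨p, q, hpq, hfpq⟩ := Fintype.exists_ne_map_eq_of_card_lt f (by simp; omega)
  obtain ⟨R, R', hR, hRR', hRp, hR'q⟩ := exists_antipodal_subfaces_of_ne hpq
  exact ⟨f p, R, R', hR, hRR', ⟨_, hf p, hRp⟩, ⟨_, hfpq ▸ hf q, hR'q⟩⟩

/-- any `d`-set facet cover of `C^d` has a set containing a pair of
antipodal ridges ((d-2)-faces). -/
theorem facet_cover_antipodal_ridges (d : ℕ) (hd : 1 ≤ d)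
    (A : Fin d → Set (Face d))
    (hfacets : ∀ i F, F ∈ A i → IsKFace F (d - 1))
    (hcover : ∀ F : Face d, IsKFace F (d - 1) → ∃ i, F ∈ A i) :
    ∃ i, ∃ R R' : Face d, IsKFace R (d - 2) ∧ Antipodal R R' ∧
      SetContains (A i) R ∧ SetContains (A i) R' :=
  facet_cover_antipodal_ridges_general d hd A hcover
end

section
/- If a set A of edges of the 3-cube has at least four edges and no two vertices lying on edges of A are antipodal, then A is exactly the set of four edges bounding some 2-face of the 3-cube. -/
open Cube

/-!
Every edge of `A` has both endpoints in the set `S` of vertices covered by `A`, and `S` contains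
no antipodal pair. A check over the 256 vertex sets of the 3-cube shows that an antipodal-free
set spans at most four edges, and exactly four only when it is the vertex set of a 2-face, the
four edges then forming that face's boundary. Since `A` has at least four edges, it is all of
them.
-/

namespace Cube

open Finset

instance {d : ℕ} (F : Face d) (k : ℕ) : Decidable (IsKFace F k) :=
  inferInstanceAs (Decidable (_ = k))

instance {d : ℕ} (G F : Face d) : Decidable (Subface G F) :=
  inferInstanceAs (Decidable (∀ _ _, _))

instance {d : ℕ} (v : Vertex d) (F : Face d) : Decidable (VMem v F) :=
  inferInstanceAs (Decidable (∀ _ _, _))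

def antipode {d : ℕ} (v : Vertex d) : Vertex d := fun i => !v i

def edgesWithin {d : ℕ} (S : Finset (Vertex d)) : Finset (Face d) :=
  univ.filter fun e => IsKFace e 1 ∧ ∀ v, VMem v e → v ∈ S

def faceBoundary {d : ℕ} (F : Face d) : Finset (Face d) :=
  univ.filter fun e => IsKFace e 1 ∧ Subface e F

lemma card_edgesWithin_le_four :
    ∀ S : Finset (Vertex 3), (∀ v ∈ S, antipode v ∉ S) → #(edgesWithin S) ≤ 4 := by
  decide +kernel

lemma exists_edgesWithin_eq_faceBoundary :
    ∀ S : Finset (Vertex 3), (∀ v ∈ S, antipode v ∉ S) → 4 ≤ #(edgesWithin S) →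
      ∃ F, IsKFace F 2 ∧ edgesWithin S = faceBoundary F := by
  decide +kernel

end Cube

/-- a set of at least four edges of `C^3` containing no pair of
antipodal vertices must be the boundary of a 2-face. -/
theorem edges_no_antipodal_vertices_bound_face (A : Set (Face 3))
    (hedges : ∀ e ∈ A, IsKFace e 1)
    (hcard : 4 ≤ A.ncard)
    (hanti : ∀ v : Vertex 3, (∃ e ∈ A, VMem v e) → ¬ ∃ e ∈ A, VMem (fun i => ! v i) e) :
    ∃ F : Face 3, IsKFace F 2 ∧ A = {e | IsKFace e 1 ∧ Subface e F} := by
  classical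
  set S : Finset (Vertex 3) := Finset.univ.filter fun v => ∃ e ∈ A, VMem v e
  have hS : ∀ v ∈ S, antipode v ∉ S := fun v hv hv' => by
    simp only [S, Finset.mem_filter, Finset.mem_univ, true_and] at hv hv'
    exact hanti v hv hv'
  have hAS : A ⊆ edgesWithin S := fun e he => by
    simpa [edgesWithin, S] using ⟨hedges e he, fun v hv => ⟨e, he, hv⟩⟩
  have hA : A = edgesWithin S :=
    Set.eq_of_subset_of_ncard_le hAS
      (by rw [Set.ncard_coe_finset]; exact (card_edgesWithin_le_four S hS).trans hcard)
  obtain ⟨F, hF, hSF⟩ := exists_edgesWithin_eq_faceBoundary S hS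
    (by rwa [← Set.ncard_coe_finset, ← hA])
  refine ⟨F, hF, ?_⟩
  rw [hA, hSF]
  ext e
  simp [faceBoundary]
end

section
/- In any cover of the twelve edges of the 3-cube by three sets of edges, at least one set contains a pair of antipodal vertices. -/
/-!
Suppose no `A i` touches an antipodal pair, and give each edge the colour of a set containing it.
The colours of the edges at `v` and at `vᶜ` are then disjoint, so with three colours one of the
two vertices has all its edges of one colour `i`, and `A i` touches its closed neighbourhood.
Closed neighbourhoods of distinct vertices of `C^3` contain an antipodal pair, so such vertices
have distinct colours; but there is one in each of the four antipodal pairs.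
-/

namespace Cube

variable {d : ℕ}

def edge (v : Vertex d) (j : Fin d) : Face d := fun k => if k = j then none else some (v k)

def touched (A : Set (Face d)) : Set (Vertex d) := {v | ∃ e ∈ A, VMem v e}

theorem isKFace_edge (v : Vertex d) (j : Fin d) : IsKFace (edge v j) 1 := by
  simp [IsKFace, edge, Finset.filter_eq']

theorem vMem_update_edge (v : Vertex d) (j : Fin d) (b : Bool) :
    VMem (Function.update v j b) (edge v j) := by
  intro k b' hk
  by_cases hkj : k = j
  · simp [edge, hkj] at hk
  · simp_all [edge]

theorem vMem_edge (v : Vertex d) (j : Fin d) : VMem v (edge v j) := by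
  simpa using vMem_update_edge v j (v j)

/-- Special to dimension 3: in `C^4` the closed neighbourhoods of two adjacent vertices contain
no antipodal pair. -/
theorem exists_update_eq_compl_update_of_ne :
    ∀ v w : Vertex 3, v ≠ w → ∃ j b k c, Function.update w k c = (Function.update v j b)ᶜ := by
  decide

theorem eq_of_forall_update_mem {S : Set (Vertex 3)} (hS : ∀ v ∈ S, vᶜ ∉ S) {v w : Vertex 3}
    (hv : ∀ j b, Function.update v j b ∈ S) (hw : ∀ j b, Function.update w j b ∈ S) : v = w := by
  by_contra hne
  obtain ⟨j, b, k, c, h⟩ := exists_update_eq_compl_update_of_ne v w hne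
  exact hS _ (hv j b) (h ▸ hw k c)

theorem const_or_const_of_disjoint_range {α β : Type*} [Fintype α] [Nonempty α] [Fintype β]
    (hβ : Fintype.card β ≤ 3) (f g : α → β) (hfg : ∀ a b, f a ≠ g b) :
    (∃ i, ∀ a, f a = i) ∨ (∃ i, ∀ b, g b = i) := by
  classical
  have const_of_card {h : α → β} (hh : (Finset.univ.image h).card ≤ 1) : ∃ i, ∀ a, h a = i :=
    ⟨h (Classical.arbitrary α), fun a => Finset.card_le_one.1 hh _ (by simp) _ (by simp)⟩
  have hdisj : Disjoint (Finset.univ.image f) (Finset.univ.image g) := by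
    simpa [Finset.disjoint_left] using fun a b => (hfg a b).symm
  have hcard := (Finset.card_union_of_disjoint hdisj).symm.le.trans
    ((Finset.card_le_univ _).trans hβ)
  by_cases hf : (Finset.univ.image f).card ≤ 1
  · exact .inl (const_of_card hf)
  · exact .inr (const_of_card (by omega))

section Cover

variable {ι : Type*} [Fintype ι] {A : ι → Set (Face 3)}

theorem exists_forall_update_mem_touched (hι : Fintype.card ι ≤ 3)
    (hcover : ∀ v j, ∃ i, edge v j ∈ A i) (hfree : ∀ i, ∀ v ∈ touched (A i), vᶜ ∉ touched (A i))
    (v : Vertex 3) :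
    ∃ u, (u = v ∨ u = vᶜ) ∧ ∃ i, ∀ j b, Function.update u j b ∈ touched (A i) := by
  choose c hc using hcover
  have hdisj : ∀ j k, c v j ≠ c vᶜ k := fun j k h =>
    hfree _ v ⟨_, hc v j, vMem_edge v j⟩ (h ▸ ⟨_, hc vᶜ k, vMem_edge vᶜ k⟩)
  rcases const_or_const_of_disjoint_range hι (c v) (c vᶜ) hdisj with ⟨i, hi⟩ | ⟨i, hi⟩
  · exact ⟨v, .inl rfl, i, fun j b => ⟨_, hi j ▸ hc v j, vMem_update_edge v j b⟩⟩
  · exact ⟨vᶜ, .inr rfl, i, fun j b => ⟨_, hi j ▸ hc vᶜ j, vMem_update_edge vᶜ j b⟩⟩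

theorem exists_compl_mem_touched_of_cover (hι : Fintype.card ι ≤ 3)
    (hcover : ∀ v j, ∃ i, edge v j ∈ A i) : ∃ i, ∃ v ∈ touched (A i), vᶜ ∈ touched (A i) := by
  classical
  by_contra! hfree
  set M := Finset.univ.filter fun v : Vertex 3 => ∃ i, ∀ j b, Function.update v j b ∈ touched (A i)
  have hM_le : M.card ≤ 3 := by
    choose col hcol using fun v : M => (Finset.mem_filter.1 v.2).2
    have hinj : Function.Injective col := fun v w h =>
      Subtype.ext (eq_of_forall_update_mem (hfree (col v)) (hcol v) (h ▸ hcol w))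
    simpa using (Fintype.card_le_of_injective col hinj).trans hι
  have hM_ge : 8 ≤ 2 * M.card := by
    have hsub : Finset.univ ⊆ M ∪ M.image compl := by
      intro v _
      obtain ⟨u, rfl | rfl, hu⟩ := exists_forall_update_mem_touched hι hcover hfree v
      · exact Finset.mem_union_left _ (Finset.mem_filter.2 ⟨Finset.mem_univ _, hu⟩)
      · exact Finset.mem_union_right _
          (Finset.mem_image.2 ⟨vᶜ, Finset.mem_filter.2 ⟨Finset.mem_univ _, hu⟩, compl_compl v⟩)
    calc 8 = (Finset.univ : Finset (Vertex 3)).card := by simp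
      _ ≤ (M ∪ M.image compl).card := Finset.card_le_card hsub
      _ ≤ M.card + (M.image compl).card := Finset.card_union_le _ _
      _ ≤ 2 * M.card := by linarith [Finset.card_image_le (s := M) (f := compl)]
  omega

end Cover

end Cube

open Cube

theorem weak_LSB_C3_general (A : Fin 3 → Set (Face 3))
    (hcover : ∀ e : Face 3, IsKFace e 1 → ∃ i, e ∈ A i) :
    ∃ i, ∃ v : Vertex 3, (∃ e ∈ A i, VMem v e) ∧ (∃ e ∈ A i, VMem (fun j => ! v j) e) := by
  obtain ⟨i, v, hv, hv'⟩ :=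
    exists_compl_mem_touched_of_cover (by simp) fun v j => hcover _ (isKFace_edge v j)
  exact ⟨i, v, hv, hv'⟩

/-- any 3-set cover of the edges of `C^3` has a set containing a pair of
antipodal vertices. -/
theorem weak_LSB_C3 (A : Fin 3 → Set (Face 3))
    (hedges : ∀ i e, e ∈ A i → IsKFace e 1)
    (hcover : ∀ e : Face 3, IsKFace e 1 → ∃ i, e ∈ A i) :
    ∃ i, ∃ v : Vertex 3, (∃ e ∈ A i, VMem v e) ∧ (∃ e ∈ A i, VMem (fun j => ! v j) e) :=
  weak_LSB_C3_general A hcover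
end

section
/- For d ≥ 3, in any cover of the ridges of the d-cube by d sets of ridges, at least one set contains a pair of antipodal vertices. -/
open Cube

/-!
Read the literal `(j, b)` as the facet `x_j = b` of the cube. A ridge is the intersection of two
facets with distinct coordinates, i.e. an edge of the cross-polytope graph on the `2d` literals,
which is `2(d-1)`-regular with `d · 2(d-1)` edges. A vertex `v` lies on one ridge and `-v` on
another exactly when their two pairs of literals are disjoint. So if no class of the cover holds an
antipodal pair, every class is a pairwise-intersecting set of edges: a star, with at most `2(d-1)`
edges, or a triangle, with `3 < 2(d-1)` edges. Counting forces every class to be a full star; their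
at most `d` centres miss at least `d ≥ 3` literals, two of which span an edge lying in no class.
-/

open Finset

theorem Sym2.exists_eq_mk_of_meet_of_notMem {α : Type*} {u v : α} {f : Sym2 α}
    (hmeet : ∃ a ∈ s(u, v), a ∈ f) (hu : u ∉ f) : ∃ w, f = s(v, w) := by
  obtain ⟨a, ha, haf⟩ := hmeet
  rcases Sym2.mem_iff.mp ha with rfl | rfl
  · exact absurd haf hu
  · exact Sym2.mem_iff_exists.mp haf

theorem Sym2.exists_mem_forall_or_card_le_three {α : Type*} [DecidableEq α]
    {C : Finset (Sym2 α)} (hdiag : ∀ e ∈ C, ¬e.IsDiag)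
    (hmeet : ∀ e ∈ C, ∀ f ∈ C, ∃ a ∈ e, a ∈ f) :
    (∃ c, ∀ e ∈ C, c ∈ e) ∨ #C ≤ 3 := by
  by_contra! ⟨hstar, hcard⟩
  obtain ⟨e, he⟩ := card_pos.mp (by omega : 0 < #C)
  induction e using Sym2.ind with | h x y => ?_
  obtain ⟨f, hf, hxf⟩ := hstar x
  obtain ⟨g, hg, hyg⟩ := hstar y
  obtain ⟨z, rfl⟩ := Sym2.exists_eq_mk_of_meet_of_notMem (hmeet _ he f hf) hxf
  obtain ⟨z', rfl⟩ := Sym2.exists_eq_mk_of_meet_of_notMem (Sym2.eq_swap ▸ hmeet _ he g hg) hyg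
  -- `z' = z` as `g` meets `s(y, z)`; an edge meeting all three sides of a triangle is a side
  have htri : C ⊆ {s(x, y), s(y, z), s(x, z')} := by
    intro k hk
    induction k using Sym2.ind with | h a b => ?_
    have hke := hmeet _ hk _ he
    have hkf := hmeet _ hk _ hf
    have hkg := hmeet _ hk _ hg
    have hfg := hmeet _ hf _ hg
    have hab := hdiag _ hk
    simp only [Sym2.mem_iff, Sym2.mk_isDiag_iff, exists_eq_or_imp, exists_eq_left,
      mem_insert, mem_singleton, Sym2.eq_iff] at hke hkf hkg hfg hab hxf hyg ⊢
    grind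
  have := (card_le_card htri).trans card_le_three
  omega

namespace SimpleGraph

variable {V : Type*} [Fintype V] [DecidableEq V] {G : SimpleGraph V} [DecidableRel G.Adj]

theorem exists_subset_incidenceFinset_or_card_le_three {C : Finset (Sym2 V)}
    (hC : C ⊆ G.edgeFinset) (hmeet : ∀ e ∈ C, ∀ f ∈ C, ∃ a ∈ e, a ∈ f) :
    (∃ c, C ⊆ G.incidenceFinset c) ∨ #C ≤ 3 := by
  have hdiag : ∀ e ∈ C, ¬e.IsDiag := fun e he =>
    G.not_isDiag_of_mem_edgeSet (mem_edgeFinset.mp (hC he))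
  refine (Sym2.exists_mem_forall_or_card_le_three hdiag hmeet).imp
    (fun ⟨c, hc⟩ => ⟨c, fun e he => ?_⟩) id
  exact (mem_incidenceFinset ..).mpr ⟨mem_edgeFinset.mp (hC he), hc e he⟩

theorem IsRegularOfDegree.exists_subset_incidenceFinset_of_cover {ι : Type*} [Fintype ι] {k : ℕ}
    (hG : G.IsRegularOfDegree k) (hk : 3 < k) (hV : Fintype.card V = 2 * Fintype.card ι)
    (E : ι → Finset (Sym2 V)) (hE : ∀ i, E i ⊆ G.edgeFinset)
    (hmeet : ∀ i, ∀ e ∈ E i, ∀ f ∈ E i, ∃ a ∈ e, a ∈ f)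
    (hcover : ∀ e ∈ G.edgeFinset, ∃ i, e ∈ E i) :
    ∀ i, ∃ c, E i ⊆ G.incidenceFinset c := by
  have hstar : ∀ i, (∃ c, E i ⊆ G.incidenceFinset c) ∨ #(E i) ≤ 3 := fun i =>
    exists_subset_incidenceFinset_or_card_le_three (hE i) (hmeet i)
  have hle : ∀ i ∈ univ, #(E i) ≤ k := fun i _ => by
    rcases hstar i with ⟨c, hc⟩ | h3
    · exact (card_le_card hc).trans (by rw [card_incidenceFinset_eq_degree, hG.degree_eq])
    · omega
  have hsum : ∑ i, #(E i) = ∑ _i : ι, k := by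
    refine le_antisymm (sum_le_sum hle) ?_
    calc ∑ _i : ι, k = #G.edgeFinset := by
          have := G.sum_degrees_eq_twice_card_edges
          simp only [hG.degree_eq, sum_const, card_univ, smul_eq_mul, hV] at this ⊢
          linarith
      _ ≤ #(univ.biUnion E) := card_le_card fun e he => by
          obtain ⟨i, hi⟩ := hcover e he
          exact mem_biUnion.mpr ⟨i, mem_univ i, hi⟩
      _ ≤ ∑ i, #(E i) := card_biUnion_le
  intro i
  have hi : #(E i) = k := (sum_eq_sum_iff_of_le hle).mp hsum i (mem_univ i)
  exact (hstar i).resolve_right (by omega)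

end SimpleGraph

namespace Cube

variable {d : ℕ}

theorem exists_vMem_and_vMem_not {R S : Face d} (h : ∀ j b, R j = some b → S j ≠ some b) :
    ∃ v : Vertex d, VMem v R ∧ VMem (fun j => !v j) S := by
  refine ⟨fun j => (R j).elim ((S j).elim false (!·)) id, fun j b hb => by simp [hb], ?_⟩
  intro j c hc
  cases hR : R j with
  | none => simp [hR, hc]
  | some b =>
    have hbc : b ≠ c := fun e => h j b hR (e ▸ hc)
    cases b <;> cases c <;> simp_all

abbrev crossGraph (d : ℕ) : SimpleGraph (Fin d × Bool) := (⊤ : SimpleGraph (Fin d)).comap Prod.fst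

theorem crossGraph_isRegularOfDegree : (crossGraph d).IsRegularOfDegree (2 * (d - 1)) := by
  intro x
  have : (crossGraph d).neighborFinset x = ({x.1}ᶜ : Finset (Fin d)) ×ˢ univ := by
    ext y
    simp [ne_comm]
  rw [← SimpleGraph.card_neighborFinset_eq_degree, this, card_product, card_compl]
  simp [mul_comm]

theorem crossGraph_exists_adj_of_two_lt_card {S : Finset (Fin d × Bool)} (hS : 2 < #S) :
    ∃ x ∈ S, ∃ y ∈ S, (crossGraph d).Adj x y := by
  by_contra! h
  obtain ⟨x, hx⟩ := card_pos.mp (by omega : 0 < #S)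
  have : S ⊆ {x.1} ×ˢ univ := fun y hy =>
    mem_product.mpr ⟨mem_singleton.mpr (by simpa [eq_comm] using h x hx y hy), mem_univ _⟩
  simpa using (card_le_card this).trans_lt' hS

theorem crossGraph_exists_edge_forall_notMem (hd : 3 ≤ d) (c : Fin d → Fin d × Bool) :
    ∃ e ∈ (crossGraph d).edgeFinset, ∀ i, c i ∉ e := by
  have hfree : 2 < #(univ.image c)ᶜ := by
    have := card_image_le (s := univ) (f := c)
    simp only [card_compl, Fintype.card_prod, Fintype.card_fin, Fintype.card_bool, card_univ] at this ⊢
    omega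
  obtain ⟨x, hx, y, hy, hxy⟩ := crossGraph_exists_adj_of_two_lt_card hfree
  refine ⟨s(x, y), SimpleGraph.mem_edgeFinset.mpr hxy, fun i hi => ?_⟩
  rcases Sym2.mem_iff.mp hi with h | h
  · exact mem_compl.mp hx (h ▸ mem_image_of_mem c (mem_univ i))
  · exact mem_compl.mp hy (h ▸ mem_image_of_mem c (mem_univ i))

def ridgeOf (e : Sym2 (Fin d × Bool)) : Face d :=
  fun j => if (j, true) ∈ e then some true else if (j, false) ∈ e then some false else none

theorem ridgeOf_eq_some_iff {e : Sym2 (Fin d × Bool)} (he : e ∈ (crossGraph d).edgeSet)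
    {j : Fin d} {b : Bool} : ridgeOf e j = some b ↔ (j, b) ∈ e := by
  induction e using Sym2.ind with | h x y => ?_
  obtain ⟨x1, x2⟩ := x
  obtain ⟨y1, y2⟩ := y
  simp only [SimpleGraph.mem_edgeSet, SimpleGraph.comap_adj, SimpleGraph.top_adj] at he
  unfold ridgeOf
  cases b <;> by_cases hx : j = x1 <;> by_cases hy : j = y1 <;> subst_vars <;> simp_all

theorem ridgeOf_eq_none_iff {e : Sym2 (Fin d × Bool)} {j : Fin d} :
    ridgeOf e j = none ↔ j ∉ e.map Prod.fst := by
  induction e using Sym2.ind with | h x y => ?_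
  unfold ridgeOf
  obtain ⟨x1, x2⟩ := x
  obtain ⟨y1, y2⟩ := y
  cases x2 <;> cases y2 <;> by_cases hx : j = x1 <;> by_cases hy : j = y1 <;> subst_vars <;>
    simp_all

theorem isKFace_ridgeOf {e : Sym2 (Fin d × Bool)} (he : e ∈ (crossGraph d).edgeSet) :
    IsKFace (ridgeOf e) (d - 2) := by
  induction e using Sym2.ind with | h x y => ?_
  have hne : x.1 ≠ y.1 := by simpa using he
  have : univ.filter (fun j => ridgeOf s(x, y) j = none) = ({x.1, y.1} : Finset (Fin d))ᶜ := by
    ext j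
    simp [ridgeOf_eq_none_iff]
  rw [IsKFace, this, card_compl, card_pair hne, Fintype.card_fin]

theorem exists_vMem_ridgeOf_and_vMem_not {e f : Sym2 (Fin d × Bool)}
    (he : e ∈ (crossGraph d).edgeSet) (hf : f ∈ (crossGraph d).edgeSet) (hef : ∀ a ∈ e, a ∉ f) :
    ∃ v : Vertex d, VMem v (ridgeOf e) ∧ VMem (fun j => !v j) (ridgeOf f) :=
  exists_vMem_and_vMem_not fun _ _ hj hj' =>
    hef _ ((ridgeOf_eq_some_iff he).mp hj) ((ridgeOf_eq_some_iff hf).mp hj')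

end Cube

theorem weak_cubical_LSB_general (d : ℕ) (hd : 3 ≤ d) (A : Fin d → Set (Face d))
    (hcover : ∀ R : Face d, IsKFace R (d - 2) → ∃ i, R ∈ A i) :
    ∃ i, ∃ v : Vertex d, (∃ R ∈ A i, VMem v R) ∧ (∃ R ∈ A i, VMem (fun j => ! v j) R) := by
  classical
  by_contra! hA
  let E i := (crossGraph d).edgeFinset.filter (ridgeOf · ∈ A i)
  have hmeet : ∀ i, ∀ e ∈ E i, ∀ f ∈ E i, ∃ a ∈ e, a ∈ f := by
    intro i e he f hf
    by_contra! hef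
    simp only [E, mem_filter, SimpleGraph.mem_edgeFinset] at he hf
    obtain ⟨v, hv, hv'⟩ := exists_vMem_ridgeOf_and_vMem_not he.1 hf.1 hef
    exact hA i v ⟨_, he.2, hv⟩ _ hf.2 hv'
  have hEcover : ∀ e ∈ (crossGraph d).edgeFinset, ∃ i, e ∈ E i := fun e he =>
    (hcover _ (isKFace_ridgeOf (SimpleGraph.mem_edgeFinset.mp he))).imp
      fun i hi => mem_filter.mpr ⟨he, hi⟩
  choose c hc using crossGraph_isRegularOfDegree.exists_subset_incidenceFinset_of_cover
    (by omega) (by simp [mul_comm]) E (fun i => filter_subset _ _) hmeet hEcover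
  obtain ⟨e, he, hce⟩ := crossGraph_exists_edge_forall_notMem hd c
  obtain ⟨i, hi⟩ := hEcover e he
  exact hce i ((SimpleGraph.mem_incidenceFinset ..).mp (hc i hi)).2

/-- for `d ≥ 3`, any `d`-set ridge cover of `C^d` has a set containing
a pair of antipodal vertices. -/
theorem weak_cubical_LSB (d : ℕ) (hd : 3 ≤ d) (A : Fin d → Set (Face d))
    (hridges : ∀ i R, R ∈ A i → IsKFace R (d - 2))
    (hcover : ∀ R : Face d, IsKFace R (d - 2) → ∃ i, R ∈ A i) :
    ∃ i, ∃ v : Vertex d, (∃ R ∈ A i, VMem v R) ∧ (∃ R ∈ A i, VMem (fun j => ! v j) R) :=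
  weak_cubical_LSB_general d hd A hcover
end

section
/- A set of ridges of the 4-cube that contains no pair of antipodal edges has at most six ridges. -/
/-!
Let the ridges of `A` contain no pair of antipodal edges. If two of them fix a coordinate `i` with
opposite values, they share a free coordinate, so they must agree at their other fixed coordinate.
Hence a coordinate at which `A` takes both values is fixed by at most two ridges of `A`. On the set
`M` of coordinates where `A` is constant, a ridge is determined by its two fixed coordinates, so
`#A ≤ (#M).choose 2 + 2 * (4 - #M) ≤ 6` once `M` is nonempty; if `M` is empty, every ridge fixes one
of three given coordinates, each fixed by at most two ridges.
-/

open Finset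

namespace Cube

variable {d : ℕ}

def fixedCoords (F : Face d) : Finset (Fin d) := univ.filter fun i => F i ≠ none

@[simp]
lemma mem_fixedCoords {F : Face d} {i : Fin d} : i ∈ fixedCoords F ↔ F i ≠ none := by
  simp [fixedCoords]

lemma card_fixedCoords_add {F : Face d} {k : ℕ} (h : IsKFace F k) : #(fixedCoords F) + k = d := by
  rw [← h, add_comm, fixedCoords, card_filter_add_card_filter_not]
  simp

lemma eq_of_fixedCoords_eq {F G : Face d} (h : fixedCoords F = fixedCoords G)
    (hval : ∀ i ∈ fixedCoords F, F i = G i) : F = G := by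
  funext i
  by_cases hi : i ∈ fixedCoords F
  · exact hval i hi
  · have hi' : i ∉ fixedCoords G := h ▸ hi
    simp only [mem_fixedCoords, not_not] at hi hi'
    rw [hi, hi']

lemma fixedCoords_eq_pair {F : Face d} (hF : #(fixedCoords F) = 2) {i j : Fin d} (hij : i ≠ j)
    (hi : F i ≠ none) (hj : F j ≠ none) : fixedCoords F = {i, j} :=
  (eq_of_subset_of_card_le (by simp [insert_subset_iff, hi, hj]) (by rw [hF, card_pair hij])).symm

lemma eq_of_two_fixed_values {F G : Face d} (hF : #(fixedCoords F) = 2)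
    (hG : #(fixedCoords G) = 2) {i j : Fin d} (hij : i ≠ j) {a b : Bool}
    (hFi : F i = some a) (hGi : G i = some a) (hFj : F j = some b) (hGj : G j = some b) :
    F = G := by
  have hFij := fixedCoords_eq_pair hF hij (by simp [hFi]) (by simp [hFj])
  have hGij := fixedCoords_eq_pair hG hij (by simp [hGi]) (by simp [hGj])
  refine eq_of_fixedCoords_eq (hFij.trans hGij.symm) fun k hk => ?_
  rw [hFij, mem_insert, mem_singleton] at hk
  rcases hk with rfl | rfl
  · rw [hFi, hGi]
  · rw [hFj, hGj]

lemma exists_eq_none_and_eq_none {R R' : Face d}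
    (hcard : #(fixedCoords R) + #(fixedCoords R') ≤ d) {i : Fin d} (hi : R i ≠ none)
    (hi' : R' i ≠ none) : ∃ l, R l = none ∧ R' l = none := by
  have hinter : 0 < #(fixedCoords R ∩ fixedCoords R') := card_pos.mpr ⟨i, by simp [hi, hi']⟩
  have hunion := card_union_add_card_inter (fixedCoords R) (fixedCoords R')
  obtain ⟨l, -, hl⟩ := exists_mem_notMem_of_card_lt_card
    (s := fixedCoords R ∪ fixedCoords R') (t := univ)
    (by simp only [card_univ, Fintype.card_fin]; omega)
  exact ⟨l, by simpa using hl⟩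

/-- The edge `e` varies at `l`, copies `R` where `R` is fixed and the flip of `R'` elsewhere. -/
theorem exists_antipodal_edges {R R' : Face d} {l : Fin d} (hl : R l = none) (hl' : R' l = none)
    (hopp : ∀ i b, R i = some b → R' i ≠ some b) :
    ∃ e e', IsKFace e 1 ∧ Antipodal e e' ∧ Subface e R ∧ Subface e' R' := by
  classical
  let e : Face d := fun i => if i = l then none else some ((R i).getD (!(R' i).getD false))
  refine ⟨e, fun i => (e i).map (!·), ?_, fun _ => rfl, ?_, ?_⟩
  · have : (univ.filter fun i => e i = none) = {l} := by ext i; simp [e]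
    simp [IsKFace, this]
  · intro i b hi
    have hil : i ≠ l := by rintro rfl; simp [hl] at hi
    simp [e, hil, hi]
  · intro i b hi
    have hil : i ≠ l := by rintro rfl; simp [hl'] at hi
    rcases hRi : R i with _ | c
    · simp [e, hil, hi, hRi]
    · have hcb : c ≠ b := by rintro rfl; exact hopp i c hRi hi
      simp [e, hil, hRi, Bool.eq_not_of_ne hcb]

-- Fails exactly when `R` contains an edge whose antipode lies in `R'`.
def Compatible (R R' : Face d) : Prop :=
  ∀ l, R l = none → R' l = none → ∃ i b, R i = some b ∧ R' i = some b

lemma compatible_of_not_exists_antipodal {A : Set (Face d)}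
    (hanti : ¬ ∃ e e' : Face d, IsKFace e 1 ∧ Antipodal e e' ∧ SetContains A e ∧ SetContains A e')
    {R R' : Face d} (hR : R ∈ A) (hR' : R' ∈ A) : Compatible R R' := by
  intro l hl hl'
  by_contra! hopp
  obtain ⟨e, e', he, hee', heR, he'R'⟩ := exists_antipodal_edges hl hl' hopp
  exact hanti ⟨e, e', he, hee', ⟨R, hR, heR⟩, ⟨R', hR', he'R'⟩⟩

lemma exists_ne_eq_some_of_compatible (hd : 4 ≤ d) {R R' : Face d}
    (hR : #(fixedCoords R) = 2) (hR' : #(fixedCoords R') = 2) (hc : Compatible R R')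
    {i : Fin d} {b : Bool} (hi : R i = some b) (hi' : R' i = some !b) :
    ∃ j ≠ i, ∃ a, R j = some a ∧ R' j = some a := by
  obtain ⟨l, hl, hl'⟩ := exists_eq_none_and_eq_none (R := R) (R' := R') (i := i) (by omega)
    (by simp [hi]) (by simp [hi'])
  obtain ⟨j, a, hj, hj'⟩ := hc l hl hl'
  refine ⟨j, ?_, a, hj, hj'⟩
  rintro rfl
  simp_all

-- Each of `R`, `R''` shares with `R'` its second fixed coordinate and the value there.
lemma eq_of_compatible_of_opposite (hd : 4 ≤ d) {R R' R'' : Face d}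
    (hR : #(fixedCoords R) = 2) (hR' : #(fixedCoords R') = 2) (hR'' : #(fixedCoords R'') = 2)
    (hc : Compatible R R') (hc' : Compatible R'' R') {i : Fin d} {b : Bool}
    (hi : R i = some b) (hi' : R' i = some !b) (hi'' : R'' i = some b) : R = R'' := by
  obtain ⟨j, hji, a, hj, hj'⟩ := exists_ne_eq_some_of_compatible hd hR hR' hc hi hi'
  obtain ⟨k, hki, a', hk, hk'⟩ := exists_ne_eq_some_of_compatible hd hR'' hR' hc' hi'' hi'
  have hkj : k = j := by
    have hk_mem : k ∈ fixedCoords R' := by simp [hk']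
    rw [fixedCoords_eq_pair hR' hji.symm (by simp [hi']) (by simp [hj']), mem_insert,
      mem_singleton] at hk_mem
    exact hk_mem.resolve_left hki
  subst hkj
  obtain rfl : a' = a := Option.some_injective _ (hk'.symm.trans hj')
  exact eq_of_two_fixed_values hR hR'' hji.symm hi hi'' hj hk

section Family

variable (s : Finset (Face d))

def fixing (i : Fin d) : Finset (Face d) := s.filter fun R => R i ≠ none

def ConstantAt (i : Fin d) : Prop := ∀ R ∈ s, ∀ R' ∈ s, R i ≠ none → R' i ≠ none → R i = R' i

variable {s}

lemma card_fixing_le_two (hd : 4 ≤ d) (hs : ∀ R ∈ s, #(fixedCoords R) = 2)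
    (hc : ∀ R ∈ s, ∀ R' ∈ s, Compatible R R') {i : Fin d} (hi : ¬ ConstantAt s i) :
    #(fixing s i) ≤ 2 := by
  simp only [ConstantAt, not_forall] at hi
  obtain ⟨R₁, h₁, R₂, h₂, hR₁i, hR₂i, hne⟩ := hi
  obtain ⟨b, hb₁⟩ := Option.ne_none_iff_exists'.mp hR₁i
  obtain ⟨b', hb₂⟩ := Option.ne_none_iff_exists'.mp hR₂i
  rw [Bool.eq_not_of_ne (fun h : b' = b => hne (by rw [hb₁, hb₂, h]))] at hb₂
  refine (card_le_card (t := {R₁, R₂}) fun R hR => ?_).trans card_le_two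
  obtain ⟨hRs, hRi⟩ := mem_filter.mp hR
  obtain ⟨c, hc_i⟩ := Option.ne_none_iff_exists'.mp hRi
  rw [mem_insert, mem_singleton]
  rcases Bool.eq_or_eq_not c b with rfl | rfl
  · exact .inl (eq_of_compatible_of_opposite hd (hs R hRs) (hs R₂ h₂) (hs R₁ h₁)
      (hc R hRs R₂ h₂) (hc R₁ h₁ R₂ h₂) hc_i hb₂ hb₁)
  · exact .inr (eq_of_compatible_of_opposite hd (hs R hRs) (hs R₁ h₁) (hs R₂ h₂)
      (hc R hRs R₁ h₁) (hc R₂ h₂ R₁ h₁) hc_i (by rw [hb₁, Bool.not_not]) hb₂)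

lemma card_filter_fixedCoords_subset_le (hs : ∀ R ∈ s, #(fixedCoords R) = 2)
    {T : Finset (Fin d)} (hT : ∀ i ∈ T, ConstantAt s i) :
    #(s.filter (fixedCoords · ⊆ T)) ≤ (#T).choose 2 := by
  rw [← card_powersetCard]
  refine card_le_card_of_injOn fixedCoords (fun R hR => ?_) fun R hR R' hR' h => ?_
  · obtain ⟨hRs, hRT⟩ := mem_filter.mp hR
    exact mem_powersetCard.mpr ⟨hRT, hs R hRs⟩
  · obtain ⟨hRs, hRT⟩ := mem_filter.mp hR
    obtain ⟨hR's, -⟩ := mem_filter.mp hR'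
    refine eq_of_fixedCoords_eq h fun i hi => hT i (hRT hi) R hRs R' hR's ?_ ?_
    · simpa using hi
    · exact mem_fixedCoords.mp (h ▸ hi)

lemma card_le_card_filter_add_two_mul (T : Finset (Fin d)) (hT : ∀ i ∉ T, #(fixing s i) ≤ 2) :
    #s ≤ #(s.filter (fixedCoords · ⊆ T)) + 2 * #Tᶜ := by
  have hcover : s ⊆ s.filter (fixedCoords · ⊆ T) ∪ Tᶜ.biUnion (fixing s) := by
    intro R hR
    by_cases hRT : fixedCoords R ⊆ T
    · exact mem_union_left _ (mem_filter.mpr ⟨hR, hRT⟩)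
    · obtain ⟨i, hiR, hiT⟩ := not_subset.mp hRT
      exact mem_union_right _ (mem_biUnion.mpr
        ⟨i, mem_compl.mpr hiT, mem_filter.mpr ⟨hR, mem_fixedCoords.mp hiR⟩⟩)
  calc #s ≤ #(s.filter (fixedCoords · ⊆ T)) + ∑ i ∈ Tᶜ, #(fixing s i) :=
        (card_le_card hcover).trans ((card_union_le _ _).trans (by gcongr; exact card_biUnion_le))
    _ ≤ #(s.filter (fixedCoords · ⊆ T)) + 2 * #Tᶜ := by
        gcongr
        rw [mul_comm, ← smul_eq_mul]
        exact sum_le_card_nsmul _ _ _ fun i hi => hT i (mem_compl.mp hi)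

end Family

end Cube

open Cube

/-- a set of ridges of `C^4` with no pair of antipodal edges has at
most six ridges. -/
theorem no_antipodal_edges_at_most_six (A : Set (Face 4))
    (hridges : ∀ R ∈ A, IsKFace R 2)
    (hanti : ¬ ∃ e e' : Face 4, IsKFace e 1 ∧ Antipodal e e' ∧
      SetContains A e ∧ SetContains A e') :
    A.ncard ≤ 6 := by
  classical
  rw [Set.ncard_eq_toFinset_card']
  set s := A.toFinset
  have hs : ∀ R ∈ s, #(fixedCoords R) = 2 := fun R hR =>
    by simpa using card_fixedCoords_add (hridges R (Set.mem_toFinset.mp hR))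
  have hc : ∀ R ∈ s, ∀ R' ∈ s, Compatible R R' := fun R hR R' hR' =>
    compatible_of_not_exists_antipodal hanti (Set.mem_toFinset.mp hR) (Set.mem_toFinset.mp hR')
  have hfix : ∀ i, ¬ ConstantAt s i → #(fixing s i) ≤ 2 := fun i => card_fixing_le_two le_rfl hs hc
  set M := univ.filter (ConstantAt s)
  by_cases hM : M = ∅
  · -- every ridge fixes one of the three coordinates other than `0`
    have hnone : s.filter (fixedCoords · ⊆ {0}) = ∅ := filter_eq_empty_iff.mpr fun R hR hR0 => by
      simpa [hs R hR] using card_le_card hR0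
    have hcount := card_le_card_filter_add_two_mul {0} fun i _ => hfix i fun hi =>
      (eq_empty_iff_forall_notMem.mp hM) i (mem_filter.mpr ⟨mem_univ _, hi⟩)
    rw [hnone, card_empty, card_compl, card_singleton, Fintype.card_fin] at hcount
    omega
  · have hM₁ : 1 ≤ #M := card_pos.mpr (nonempty_iff_ne_empty.mpr hM)
    have hM₄ : #M ≤ 4 := card_le_univ M |>.trans (by simp)
    have hpairs := card_filter_fixedCoords_subset_le hs (T := M) fun i hi => (mem_filter.mp hi).2
    have hcount := card_le_card_filter_add_two_mul M fun i hi => hfix i fun hci =>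
      hi (mem_filter.mpr ⟨mem_univ _, hci⟩)
    rw [card_compl, Fintype.card_fin] at hcount
    have hbound : (#M).choose 2 + 2 * (4 - #M) ≤ 6 := by interval_cases #M <;> decide
    omega
end

section
/- Suppose A_1,...,A_4 is a cover of the ridges of the 4-cube by four sets of ridges, and A_1 consists precisely of the six ridges of a single facet. Then some set A_j (j ≥ 2) contains a pair of antipodal edges. -/
open Cube

/-! A facet fixes some coordinate `i₀`, so no ridge of `A 0` varies in `i₀`. The ridges varying in
`i₀` are the prisms over the edges of `C^3`, so `A 1, A 2, A 3` colour the edges of `C^3`; the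
edges of `C^4` varying in `i₀` are the prisms over its vertices. It therefore suffices that in
every 3-colouring of the edges of `C^3` some colour meets two antipodal vertices. Otherwise the
colours at `v` and at `vᶜ` are disjoint, so one of these two vertices is monochromatic, and no two
adjacent vertices are. Hence for a monochromatic `u` the three vertices at distance two from it are
monochromatic too, and these four vertices carry pairwise distinct colours, since each of them is
adjacent to the antipode of each other one. -/

namespace Cube

section Prism

variable {d k : ℕ} (i₀ : Fin (d + 1))

def prism (F : Face d) : Face (d + 1) := Fin.insertNth i₀ none F

@[simp] lemma prism_apply_self (F : Face d) : prism i₀ F i₀ = none := Fin.insertNth_apply_same ..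

@[simp] lemma prism_apply_succAbove (F : Face d) (i : Fin d) :
    prism i₀ F (i₀.succAbove i) = F i :=
  Fin.insertNth_apply_succAbove ..

lemma isKFace_prism_iff {F : Face d} : IsKFace (prism i₀ F) (k + 1) ↔ IsKFace F k := by
  simp only [IsKFace, Finset.card_filter, Fin.sum_univ_succAbove _ i₀, prism_apply_self,
    prism_apply_succAbove, if_true]
  omega

lemma subface_prism_iff {F G : Face d} : Subface (prism i₀ G) (prism i₀ F) ↔ Subface G F := by
  simp [Subface, Fin.forall_iff_succAbove i₀]

lemma antipodal_prism_iff {F G : Face d} :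
    Antipodal (prism i₀ F) (prism i₀ G) ↔ Antipodal F G := by
  simp [Antipodal, Fin.forall_iff_succAbove i₀]

end Prism

lemma exists_eq_some_of_isKFace {d k : ℕ} {F : Face d} (hF : IsKFace F k) (hk : k < d) :
    ∃ i b, F i = some b := by
  by_contra! h
  have : ∀ i, F i = none := fun i => Option.eq_none_iff_forall_ne_some.2 (h i)
  simp [IsKFace, this] at hF
  omega

section Vertex

variable {d : ℕ} (v : Vertex d) (i : Fin d)

def vertexFace : Face d := fun j => some (v j)

def edgeAt : Face d := Function.update (vertexFace v) i none

def flipAt : Vertex d := Function.update v i (!v i)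

lemma isKFace_vertexFace : IsKFace (vertexFace v) 0 := by
  simp [IsKFace, vertexFace]

lemma isKFace_edgeAt : IsKFace (edgeAt v i) 1 := by
  simp [IsKFace, edgeAt, vertexFace, Function.update_apply, Finset.card_eq_one]
  exact ⟨i, by ext; simp⟩

lemma subface_vertexFace_edgeAt : Subface (vertexFace v) (edgeAt v i) := by
  intro j b hj
  by_cases h : j = i
  · simp [edgeAt, h] at hj
  · simpa [edgeAt, h] using hj

lemma antipodal_vertexFace_compl : Antipodal (vertexFace v) (vertexFace vᶜ) := fun _ => rfl

lemma edgeAt_flipAt : edgeAt (flipAt v i) i = edgeAt v i := by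
  ext1 j
  by_cases h : j = i <;> simp [edgeAt, flipAt, vertexFace, h]

lemma compl_flipAt : (flipAt v i)ᶜ = flipAt vᶜ i := by
  ext1 j
  by_cases h : j = i <;> simp [flipAt, h]

end Vertex

lemma flipAt_flipAt_add_two (v : Vertex 3) (i : Fin 3) :
    flipAt (flipAt v i) (i + 2) = (flipAt v (i + 1))ᶜ := by
  revert v i; decide

lemma four_le_card_of_pairwise_ne {κ : Type*} [Fintype κ] {a b c d : κ} (hab : a ≠ b)
    (hac : a ≠ c) (had : a ≠ d) (hbc : b ≠ c) (hbd : b ≠ d) (hcd : c ≠ d) :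
    4 ≤ Fintype.card κ := by
  classical
  calc 4 = ({a, b, c, d} : Finset κ).card := by simp [*]
    _ ≤ Fintype.card κ := Finset.card_le_univ _

lemma const_or_const_of_forall_ne {ι κ : Type*} [Fintype κ] (hκ : Fintype.card κ ≤ 3)
    {x y : ι → κ} (hxy : ∀ i j, x i ≠ y j) : (∀ i j, x i = x j) ∨ (∀ i j, y i = y j) := by
  by_contra! ⟨⟨i, i', hi⟩, ⟨j, j', hj⟩⟩
  have := four_le_card_of_pairwise_ne hi (hxy i j) (hxy i j') (hxy i' j) (hxy i' j') hj
  omega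

section Coloring

variable {κ : Type*} (col : Face 3 → κ)

def IsMonochromaticAt (v : Vertex 3) : Prop := ∀ i j, col (edgeAt v i) = col (edgeAt v j)

variable {col}

lemma not_isMonochromaticAt_flipAt (H : ∀ v i j, col (edgeAt v i) ≠ col (edgeAt vᶜ j))
    {v : Vertex 3} (hv : IsMonochromaticAt col v) (i : Fin 3) :
    ¬ IsMonochromaticAt col (flipAt v i) := by
  intro hw
  apply H (flipAt v (i + 1)) (i + 1) (i + 2)
  rw [← flipAt_flipAt_add_two, edgeAt_flipAt, edgeAt_flipAt, ← hw i, edgeAt_flipAt, hv]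

theorem exists_color_edgeAt_eq_edgeAt_compl [Fintype κ] (hκ : Fintype.card κ ≤ 3)
    (col : Face 3 → κ) : ∃ v i j, col (edgeAt v i) = col (edgeAt vᶜ j) := by
  by_contra! H
  have mono_or : ∀ v, IsMonochromaticAt col v ∨ IsMonochromaticAt col vᶜ :=
    fun v => const_or_const_of_forall_ne hκ (H v)
  obtain ⟨u, hu⟩ : ∃ u, IsMonochromaticAt col u :=
    (mono_or default).elim (⟨_, ·⟩) (⟨_, ·⟩)
  have hv i : IsMonochromaticAt col (flipAt u i)ᶜ :=
    (mono_or _).resolve_left (not_isMonochromaticAt_flipAt H hu i)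
  have hu_ne i : col (edgeAt u 0) ≠ col (edgeAt (flipAt u i)ᶜ 0) := by
    rw [hv i 0 i, compl_flipAt, edgeAt_flipAt]
    exact H u 0 i
  have hv_ne i : col (edgeAt (flipAt u i)ᶜ 0) ≠ col (edgeAt (flipAt u (i + 1))ᶜ 0) := by
    rw [hv (i + 1) 0 (i + 2), ← flipAt_flipAt_add_two, edgeAt_flipAt]
    simpa using H (flipAt u i)ᶜ 0 (i + 2)
  have := four_le_card_of_pairwise_ne (hu_ne 0) (hu_ne 1) (hu_ne 2) (hv_ne 0) (hv_ne 2).symm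
    (hv_ne 1)
  omega

end Coloring

end Cube

theorem facet_set_forces_antipodal_edges_general (A : Fin 4 → Set (Face 4))
    (hcover : ∀ R : Face 4, IsKFace R 2 → ∃ i, R ∈ A i)
    (F : Face 4) (hF : IsKFace F 3)
    (hA0 : A 0 = {R | IsKFace R 2 ∧ Subface R F}) :
    ∃ j : Fin 4, j ≠ 0 ∧ ∃ e e' : Face 4, IsKFace e 1 ∧ Antipodal e e' ∧
      SetContains (A j) e ∧ SetContains (A j) e' := by
  obtain ⟨i₀, b₀, hi₀⟩ := exists_eq_some_of_isKFace hF (by norm_num)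
  have hprism : ∀ r : Face 3, ∃ j : {j : Fin 4 // j ≠ 0}, IsKFace r 1 → prism i₀ r ∈ A j := by
    intro r
    by_cases hr : IsKFace r 1
    · obtain ⟨j, hj⟩ := hcover _ ((isKFace_prism_iff i₀).2 hr)
      refine ⟨⟨j, ?_⟩, fun _ => hj⟩
      rintro rfl
      rw [hA0] at hj
      simpa using hj.2 i₀ b₀ hi₀
    · exact ⟨⟨1, by decide⟩, fun h => absurd h hr⟩
  choose col hcol using hprism
  obtain ⟨v, i, i', hvi⟩ := exists_color_edgeAt_eq_edgeAt_compl (by simp) col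
  have hcontains w k : SetContains (A (col (edgeAt w k))) (prism i₀ (vertexFace w)) :=
    ⟨_, hcol _ (isKFace_edgeAt w k), (subface_prism_iff i₀).2 (subface_vertexFace_edgeAt w k)⟩
  exact ⟨_, (col (edgeAt v i)).2, _, _, (isKFace_prism_iff i₀).2 (isKFace_vertexFace v),
    (antipodal_prism_iff i₀).2 (antipodal_vertexFace_compl v), hcontains v i,
    hvi ▸ hcontains vᶜ i'⟩

/-- in a 4-set ridge cover of `C^4` whose first set is exactly the
six ridges of a single facet, some other set contains a pair of antipodal edges. -/
theorem facet_set_forces_antipodal_edges (A : Fin 4 → Set (Face 4))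
    (hridges : ∀ i R, R ∈ A i → IsKFace R 2)
    (hcover : ∀ R : Face 4, IsKFace R 2 → ∃ i, R ∈ A i)
    (F : Face 4) (hF : IsKFace F 3)
    (hA0 : A 0 = {R | IsKFace R 2 ∧ Subface R F}) :
    ∃ j : Fin 4, j ≠ 0 ∧ ∃ e e' : Face 4, IsKFace e 1 ∧ Antipodal e e' ∧
      SetContains (A j) e ∧ SetContains (A j) e' :=
  facet_set_forces_antipodal_edges_general A hcover F hF hA0
end
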